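/- Let E = {x ∈ ℕ^ℕ : liminf_n x(n) is finite and even} and O = {x ∈ ℕ^ℕ : liminf_n x(n) is finite and odd}. Then E and O are disjoint sets in Σ⁰₃(ℕ^ℕ) and there is no set C in Δ⁰₃(ℕ^ℕ) with E ⊆ C and C ∩ O = ∅. -/

import Mathlib

/-- The Borel hierarchy: `SigmaZero α A` means `A` is in the Borel class Σ⁰_α.
Σ⁰₁ is the collection of open sets; for α > 1, Σ⁰_α consists of countable unions
⋃ k, A k where each A k is the complement of a Σ⁰_{β k} set for some 1 ≤ β k < α. -/
inductive SigmaZero {X : Type*} [TopologicalSpace X] : Ordinal.{0} → Set X → Prop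
  | isOpen {A : Set X} (h : IsOpen A) : SigmaZero 1 A
  | iUnion {α : Ordinal.{0}} (hα : 1 < α) (A : ℕ → Set X) (β : ℕ → Ordinal.{0})
      (hβ1 : ∀ k, 1 ≤ β k) (hβ : ∀ k, β k < α)
      (h : ∀ k, SigmaZero (β k) (A k)ᶜ) : SigmaZero α (⋃ k, A k)

/-- `A` is Π⁰_α iff its complement is Σ⁰_α. -/
def PiZero {X : Type*} [TopologicalSpace X] (α : Ordinal.{0}) (A : Set X) : Prop :=
  SigmaZero α Aᶜ

/-- `A` is Δ⁰_α iff it is both Σ⁰_α and Π⁰_α. -/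
def DeltaZero {X : Type*} [TopologicalSpace X] (α : Ordinal.{0}) (A : Set X) : Prop :=
  SigmaZero α A ∧ PiZero α A

/-- `liminf_n x n` is finite and equals `k`: `k` is the least natural number such that
`x n ≤ k` for infinitely many `n` (such a `k` exists iff `x` does not tend to infinity). -/
def LiminfEq (x : ℕ → ℕ) (k : ℕ) : Prop :=
  {n | x n ≤ k}.Infinite ∧ ∀ j < k, {n | x n ≤ j}.Finite

/-- Sequences whose liminf is finite and even. -/
def Eset : Set (ℕ → ℕ) := {x | ∃ k, Even k ∧ LiminfEq x k}

/-- Sequences whose liminf is finite and odd. -/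
def Oset : Set (ℕ → ℕ) := {x | ∃ k, Odd k ∧ LiminfEq x k}


/-!
Both sets are G_δσ: `liminf x = k` says that `x n ≤ k` for infinitely many `n` (a G_δ condition)
and that `k ≤ x n` from some `n` on.

For the separation, present a G_δσ set as `⋃ i, ⋂ m, R i m` with open `R i m`, and let `x` climb
`R i 0, R i 1, …` along its cylinders: the depth of `i` at stage `n` is how many of these sets
contain the cylinder of length `n` around `x`. The sequence recording at each stage `n` the least
`i` whose depth grows is a continuous function of `x`, and its liminf is the least `i` with
`x ∈ ⋂ m, R i m`. A Δ⁰₃ set separating `E` from `O` therefore pulls back to a Δ⁰₃ set containing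
the points whose least index is even and avoiding those whose least index is odd. For `R` made of
the even and odd halves of a universal G_δσ set, the usual diagonal argument produces a point
violating this.
-/

open Set Filter PiNat TopologicalSpace

section BorelHierarchy

variable {X Y : Type*} [TopologicalSpace X] [TopologicalSpace Y]

lemma sigmaZero_one_iff {A : Set X} : SigmaZero 1 A ↔ IsOpen A := by
  refine ⟨fun h => ?_, SigmaZero.isOpen⟩
  cases h with
  | isOpen h => exact h
  | iUnion hα => exact absurd hα (lt_irrefl 1)

lemma SigmaZero.exists_eq_iUnion {α : Ordinal} {A : Set X} (h : SigmaZero α A) (hα : 1 < α) :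
    ∃ (B : ℕ → Set X) (β : ℕ → Ordinal), (∀ k, 1 ≤ β k) ∧ (∀ k, β k < α) ∧
      (∀ k, SigmaZero (β k) (B k)ᶜ) ∧ A = ⋃ k, B k := by
  cases h with
  | isOpen => exact absurd hα (lt_irrefl 1)
  | iUnion _ B β hβ1 hβ hB => exact ⟨B, β, hβ1, hβ, hB, rfl⟩

lemma SigmaZero.preimage {f : X → Y} (hf : Continuous f) {α : Ordinal} {A : Set Y}
    (h : SigmaZero α A) : SigmaZero α (f ⁻¹' A) := by
  induction h with
  | isOpen h => exact .isOpen (h.preimage hf)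
  | iUnion hα B β hβ1 hβ _ ih =>
    rw [preimage_iUnion]
    exact .iUnion hα _ β hβ1 hβ fun k => by simpa only [preimage_compl] using ih k

lemma sigmaZero_iUnion {α : Ordinal} (hα : 1 < α) {A : ℕ → Set X}
    (h : ∀ k, SigmaZero α (A k)) : SigmaZero α (⋃ k, A k) := by
  choose B β hβ1 hβ hB hA using fun k => (h k).exists_eq_iUnion hα
  simp_rw [hA, ← iUnion_unpair]
  exact .iUnion hα _ _ (fun _ => hβ1 _ _) (fun _ => hβ _ _) fun _ => hB _ _

lemma IsGδ.of_sigmaZero_compl [PerfectlyNormalSpace X] {β : Ordinal} {A : Set X} (h1 : 1 ≤ β)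
    (h3 : β < 3) (h : SigmaZero β Aᶜ) : IsGδ A := by
  have eq_one : ∀ {γ : Ordinal}, 1 ≤ γ → γ < 2 → γ = 1 := fun h1 h2 =>
    le_antisymm (Order.lt_add_one_iff.1 (by rwa [one_add_one_eq_two])) h1
  rw [show (3 : Ordinal) = 2 + 1 by norm_num, Order.lt_add_one_iff] at h3
  rcases h3.lt_or_eq with h2 | rfl
  · rw [eq_one h1 h2, sigmaZero_one_iff, isOpen_compl_iff] at h
    exact h.isGδ
  · obtain ⟨B, β', hβ1, hβ2, hB, hA⟩ := h.exists_eq_iUnion one_lt_two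
    rw [← compl_compl A, hA, compl_iUnion]
    refine .iInter_of_isOpen fun k => ?_
    simpa only [eq_one (hβ1 k) (hβ2 k), sigmaZero_one_iff] using hB k

lemma sigmaZero_three_iff [PerfectlyNormalSpace X] {A : Set X} :
    SigmaZero 3 A ↔ ∃ V : ℕ → ℕ → Set X, (∀ n m, IsOpen (V n m)) ∧ A = ⋃ n, ⋂ m, V n m := by
  constructor
  · intro h
    obtain ⟨B, β, hβ1, hβ3, hB, rfl⟩ := h.exists_eq_iUnion (by norm_num)
    choose V hV hBV using fun k =>
      isGδ_iff_eq_iInter_nat.1 (IsGδ.of_sigmaZero_compl (hβ1 k) (hβ3 k) (hB k))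
    exact ⟨V, hV, iUnion_congr hBV⟩
  · rintro ⟨V, hV, rfl⟩
    refine .iUnion (by norm_num) _ (fun _ => 2) (fun _ => by norm_num) (fun _ => by norm_num)
      fun n => ?_
    rw [compl_iInter]
    exact .iUnion one_lt_two _ (fun _ => 1) (fun _ => le_rfl) (fun _ => one_lt_two)
      fun m => by simpa only [compl_compl] using SigmaZero.isOpen (hV n m)

end BorelHierarchy

section Liminf

lemma liminfEq_iff {x : ℕ → ℕ} {k : ℕ} :
    LiminfEq x k ↔ (∀ M, ∃ n ≥ M, x n ≤ k) ∧ ∃ N, ∀ n ≥ N, k ≤ x n := by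
  rw [LiminfEq, ← Nat.frequently_atTop_iff_infinite, frequently_atTop]
  refine and_congr_right' ⟨fun h => ?_, fun ⟨N, hN⟩ j hj => ?_⟩
  · cases k with
    | zero => exact ⟨0, fun n _ => Nat.zero_le _⟩
    | succ k =>
      obtain ⟨N, hN⟩ := (h k k.lt_succ_self).bddAbove
      refine ⟨N + 1, fun n hn => ?_⟩
      by_contra! hlt
      have : n ≤ N := hN (show x n ≤ k by omega)
      omega
  · refine (finite_Iio N).subset fun n (hn : x n ≤ j) => ?_
    by_contra hN'
    have := hN n (not_lt.1 hN')
    omega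

lemma liminfEq_unique {x : ℕ → ℕ} {k k' : ℕ} (h : LiminfEq x k) (h' : LiminfEq x k') : k = k' := by
  by_contra hne
  rcases Nat.lt_or_gt_of_ne hne with hlt | hlt
  · exact h.1 (h'.2 k hlt)
  · exact h'.1 (h.2 k' hlt)

lemma isOpen_setOf_apply {p : ℕ → Prop} (n : ℕ) : IsOpen {x : ℕ → ℕ | p (x n)} :=
  (isOpen_discrete {v | p v}).preimage (continuous_apply n)

lemma sigmaZero_three_setOf_liminfEq (k : ℕ) : SigmaZero 3 {x : ℕ → ℕ | LiminfEq x k} := by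
  refine sigmaZero_three_iff.2 ⟨fun N M => (⋃ n ≥ M, {x | x n ≤ k}) ∩ {x | N ≤ M → k ≤ x M},
    fun N M => (isOpen_biUnion fun n _ => isOpen_setOf_apply (p := (· ≤ k)) n).inter
      (isOpen_setOf_apply (p := fun v => N ≤ M → k ≤ v) M), ?_⟩
  ext x
  simp only [liminfEq_iff, mem_ofPred_eq, mem_iUnion, mem_iInter, mem_inter_iff, exists_prop]
  exact ⟨fun ⟨h, N, hN⟩ => ⟨N, fun M => ⟨h M, hN M⟩⟩,
    fun ⟨N, h⟩ => ⟨fun M => (h M).1, N, fun M => (h M).2⟩⟩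

lemma sigmaZero_three_setOf_exists_liminfEq (p : ℕ → Prop) :
    SigmaZero 3 {x : ℕ → ℕ | ∃ k, p k ∧ LiminfEq x k} := by
  rw [ofPred_exists]
  refine sigmaZero_iUnion (by norm_num) fun k => ?_
  by_cases hk : p k
  · simpa only [hk, true_and] using sigmaZero_three_setOf_liminfEq k
  · simpa only [hk, false_and, ofPred_false] using
      sigmaZero_three_iff.2 ⟨fun _ _ => ∅, fun _ _ => isOpen_empty,
        by simp only [iInter_const, iUnion_empty]⟩

lemma disjoint_Eset_Oset : Disjoint Eset Oset := by
  rw [Set.disjoint_left]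
  rintro x ⟨k, hk, hx⟩ ⟨k', hk', hx'⟩
  rw [liminfEq_unique hx hx'] at hk
  exact Nat.not_even_iff_odd.2 hk' hk

end Liminf

lemma Monotone.infinite_setOf_lt_succ_iff {g : ℕ → ℕ} (hg : Monotone g) :
    {n | g n < g (n + 1)}.Infinite ↔ ¬ BddAbove (range g) := by
  constructor
  · rintro hinf ⟨B, hB⟩
    have hmono : StrictMonoOn (fun n => g (n + 1)) {n | g n < g (n + 1)} :=
      fun a _ b (hb : g b < g (b + 1)) hab => (hg (Nat.succ_le_of_lt hab)).trans_lt hb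
    refine hinf (Finite.of_finite_image ((finite_Iic B).subset ?_) hmono.injOn)
    rintro _ ⟨n, -, rfl⟩
    exact hB (mem_range_self _)
  · intro hunb hfin
    obtain ⟨N, hN⟩ := hfin.bddAbove
    refine hunb ⟨g (N + 1), forall_mem_range.2 fun n => ?_⟩
    rcases le_total n (N + 1) with h | h
    · exact hg h
    · induction n, h using Nat.le_induction with
      | base => exact le_rfl
      | succ n hn ih =>
        have : ¬ g n < g (n + 1) := fun hlt => by have := hN hlt; omega
        omega

lemma continuous_of_forall_eq_on_cylinder {E : ℕ → Type*} [∀ n, TopologicalSpace (E n)]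
    [∀ n, DiscreteTopology (E n)] {ι β : Type*} [TopologicalSpace β] {f : (∀ n, E n) → ι → β}
    (hf : ∀ i, ∃ k, ∀ x, ∀ y ∈ cylinder x k, f y i = f x i) : Continuous f :=
  continuous_pi fun i => by
    obtain ⟨k, hk⟩ := hf i
    exact ((IsLocallyConstant.iff_exists_open _).2 fun x =>
      ⟨cylinder x k, isOpen_cylinder E x k, self_mem_cylinder x k, hk x⟩).continuous

section LeastIndexReduction

variable (W : ℕ → ℕ → Set (ℕ → ℕ))

/-- How many of `W i 0, W i 1, …` in a row contain `cylinder x n`; the cap `n` keeps it away from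
the junk value `sInf ∅ = 0`. -/
noncomputable def cylinderDepth (i : ℕ) (x : ℕ → ℕ) (n : ℕ) : ℕ :=
  sInf (insert n {m | ¬ cylinder x n ⊆ W i m})

noncomputable def leastIndexReduction (x : ℕ → ℕ) (n : ℕ) : ℕ :=
  sInf (insert n {i | cylinderDepth W i x n < cylinderDepth W i x (n + 1)})

variable {W}

lemma cylinderDepth_le_of_notMem {i m : ℕ} {x : ℕ → ℕ} (h : x ∉ W i m) (n : ℕ) :
    cylinderDepth W i x n ≤ m :=
  Nat.sInf_le (mem_insert_of_mem _ fun hsub => h (hsub (self_mem_cylinder x n)))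

lemma monotone_cylinderDepth (i : ℕ) (x : ℕ → ℕ) : Monotone (cylinderDepth W i x) := by
  intro n n' hnn'
  rcases Nat.sInf_mem (insert_nonempty n' {m | ¬ cylinder x n' ⊆ W i m}) with h | h
  · exact (Nat.sInf_le (mem_insert n _)).trans (hnn'.trans_eq h.symm)
  · exact Nat.sInf_le (mem_insert_of_mem _ fun hsub => h ((cylinder_anti x hnn').trans hsub))

lemma not_bddAbove_range_cylinderDepth {i : ℕ} {x : ℕ → ℕ} (hW : ∀ m, IsOpen (W i m))
    (hx : ∀ m, x ∈ W i m) : ¬ BddAbove (range (cylinderDepth W i x)) := by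
  rintro ⟨B, hB⟩
  have hev : ∀ m, ∀ᶠ n in atTop, cylinder x n ⊆ W i m := fun m => by
    obtain ⟨_, ⟨y, k, rfl⟩, hxy, hsub⟩ :=
      (isTopologicalBasis_cylinders _).exists_subset_of_mem_open (hx m) (hW m)
    filter_upwards [eventually_ge_atTop k] with n hn
    exact (cylinder_anti x hn).trans ((mem_cylinder_iff_eq.1 hxy).symm ▸ hsub)
  obtain ⟨n, hn, hsub⟩ := ((eventually_gt_atTop B).and
    ((eventually_all_finite (finite_Iic B)).2 fun m _ => hev m)).exists
  have hdepth : B + 1 ≤ cylinderDepth W i x n := by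
    refine le_csInf (insert_nonempty _ _) ?_
    rintro m (rfl | hm)
    · exact hn
    · exact Nat.succ_le_of_lt (lt_of_not_ge fun hmB => hm (hsub m hmB))
  have := hB (mem_range_self n)
  omega

lemma cylinderDepth_congr {i n : ℕ} {x y : ℕ → ℕ} (h : y ∈ cylinder x n) :
    cylinderDepth W i y n = cylinderDepth W i x n := by
  simp only [cylinderDepth, mem_cylinder_iff_eq.1 h]

variable (W) in
lemma continuous_leastIndexReduction : Continuous (leastIndexReduction W) :=
  continuous_of_forall_eq_on_cylinder fun n => ⟨n + 1, fun x y hy => by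
    simp only [leastIndexReduction, cylinderDepth_congr hy,
      cylinderDepth_congr (cylinder_anti x n.le_succ hy)]⟩

lemma liminfEq_leastIndexReduction (hW : ∀ i m, IsOpen (W i m)) {x : ℕ → ℕ} {j : ℕ}
    (hj : IsLeast {i | ∀ m, x ∈ W i m} j) : LiminfEq (leastIndexReduction W x) j := by
  constructor
  · refine Infinite.mono (fun n hn => Nat.sInf_le (mem_insert_of_mem _ hn)) ?_
    exact (monotone_cylinderDepth j x).infinite_setOf_lt_succ_iff.2
      (not_bddAbove_range_cylinderDepth (hW j) hj.1)
  · intro j' hj'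
    have hfin : ∀ i ≤ j', {n | cylinderDepth W i x n < cylinderDepth W i x (n + 1)}.Finite := by
      intro i hi
      obtain ⟨m, hm⟩ : ∃ m, x ∉ W i m := by
        by_contra! h
        exact absurd (hj.2 h) (by omega)
      exact not_infinite.1 fun hinf => (monotone_cylinderDepth i x).infinite_setOf_lt_succ_iff.1
        hinf ⟨m, forall_mem_range.2 (cylinderDepth_le_of_notMem hm)⟩
    refine ((finite_Iic j').union ((finite_Iic j').biUnion hfin)).subset fun n hn => ?_
    rcases Nat.sInf_mem (insert_nonempty n _) with h | h
    · exact Or.inl (h ▸ hn)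
    · exact Or.inr (mem_iUnion₂.2 ⟨_, hn, h⟩)

end LeastIndexReduction

section Universal

variable {X : Type*} [TopologicalSpace X]

lemma exists_nat_isOpen_basis [SecondCountableTopology X] :
    ∃ b : ℕ → Set X, (∀ k, IsOpen (b k)) ∧ ∀ G, IsOpen G → ∀ x ∈ G, ∃ k, x ∈ b k ∧ b k ⊆ G := by
  refine ⟨enumerateCountable (countable_countableBasis X) ∅, fun k => ?_, fun G hG x hx => ?_⟩
  · rcases range_enumerateCountable_subset _ _ (mem_range_self k) with h | h
    · exact h ▸ isOpen_empty
    · exact isOpen_of_mem_countableBasis h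
  · obtain ⟨B, hB, hxB, hBG⟩ := (isBasis_countableBasis X).exists_subset_of_mem_open hx hG
    obtain ⟨k, rfl⟩ := subset_range_enumerate (countable_countableBasis X) ∅ hB
    exact ⟨k, hxB, hBG⟩

/-- A code `a : ℕ → ℕ` lists, at the coordinates `⟪n, m, k⟫` where it vanishes, basic open sets
`b k` whose union is the `m`-th open set of the `n`-th G_δ set. -/
def universalOpen (b : ℕ → Set X) (n m : ℕ) : Set ((ℕ → ℕ) × X) :=
  {p | ∃ k, p.1 (Nat.pair n (Nat.pair m k)) = 0 ∧ p.2 ∈ b k}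

lemma isOpen_universalOpen {b : ℕ → Set X} (hb : ∀ k, IsOpen (b k)) (n m : ℕ) :
    IsOpen (universalOpen b n m) := by
  simp only [universalOpen, ofPred_exists]
  exact isOpen_iUnion fun k =>
    ((isOpen_discrete {0}).preimage ((continuous_apply _).comp continuous_fst)).inter
      ((hb k).preimage continuous_snd)

lemma exists_iUnion_iInter_eq_universalOpen {b : ℕ → Set X}
    (hb : ∀ G, IsOpen G → ∀ x ∈ G, ∃ k, x ∈ b k ∧ b k ⊆ G) {V : ℕ → ℕ → Set X}
    (hV : ∀ n m, IsOpen (V n m)) :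
    ∃ a : ℕ → ℕ, ∀ x, x ∈ ⋃ n, ⋂ m, V n m ↔ (a, x) ∈ ⋃ n, ⋂ m, universalOpen b n m := by
  classical
  let a : ℕ → ℕ := fun t =>
    if b t.unpair.2.unpair.2 ⊆ V t.unpair.1 t.unpair.2.unpair.1 then 0 else 1
  refine ⟨a, fun x => ?_⟩
  have key : ∀ n m, x ∈ V n m ↔ (a, x) ∈ universalOpen b n m := fun n m => by
    simp only [universalOpen, a, mem_ofPred_eq, Nat.unpair_pair, ite_eq_left_iff, one_ne_zero,
      imp_false, not_not]
    exact ⟨fun hx => (hb _ (hV n m) x hx).imp fun k ⟨hxk, hk⟩ => ⟨hk, hxk⟩,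
      fun ⟨k, hk, hxk⟩ => hk hxk⟩
  simp only [mem_iUnion, mem_iInter, key]

end Universal

section Diagonal

def half (c : ℕ) (x : ℕ → ℕ) : ℕ → ℕ := fun k => x (2 * k + c)

def interleave (a a' : ℕ → ℕ) : ℕ → ℕ := fun n => if n % 2 = 0 then a (n / 2) else a' (n / 2)

lemma half_zero_interleave (a a' : ℕ → ℕ) : half 0 (interleave a a') = a := by
  funext k
  simp [half, interleave]

lemma half_one_interleave (a a' : ℕ → ℕ) : half 1 (interleave a a') = a' := by
  funext k
  simp only [half, interleave]
  rw [if_neg (by omega), show (2 * k + 1) / 2 = k by omega]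

lemma continuous_half (c : ℕ) : Continuous (half c) :=
  continuous_pi fun k => continuous_apply (2 * k + c)

def diagonalFamily (b : ℕ → Set (ℕ → ℕ)) (i m : ℕ) : Set (ℕ → ℕ) :=
  (fun x => (half (i % 2) x, x)) ⁻¹' universalOpen b (i / 2) m

lemma exists_mod_two_mem_diagonalFamily_iff (b : ℕ → Set (ℕ → ℕ)) {c : ℕ} (hc : c < 2)
    (x : ℕ → ℕ) : (∃ i, i % 2 = c ∧ ∀ m, x ∈ diagonalFamily b i m) ↔
      (half c x, x) ∈ ⋃ n, ⋂ m, universalOpen b n m := by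
  simp only [diagonalFamily, mem_preimage, mem_iUnion, mem_iInter]
  constructor
  · rintro ⟨i, rfl, hi⟩
    exact ⟨i / 2, hi⟩
  · rintro ⟨n, hn⟩
    refine ⟨2 * n + c, by omega, ?_⟩
    rwa [show (2 * n + c) % 2 = c by omega, show (2 * n + c) / 2 = n by omega]

theorem exists_isOpen_family_isLeast_iff_odd :
    ∃ R : ℕ → ℕ → Set (ℕ → ℕ), (∀ i m, IsOpen (R i m)) ∧
      ∀ C : Set (ℕ → ℕ), SigmaZero 3 C → SigmaZero 3 Cᶜ →
        ∃ x j, IsLeast {i | ∀ m, x ∈ R i m} j ∧ (x ∈ C ↔ Odd j) := by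
  obtain ⟨b, hb_open, hb⟩ := exists_nat_isOpen_basis (X := ℕ → ℕ)
  refine ⟨diagonalFamily b, fun i m => (isOpen_universalOpen hb_open _ _).preimage
    ((continuous_half _).prodMk continuous_id), fun C hC hCc => ?_⟩
  obtain ⟨V, hV, hVC⟩ := sigmaZero_three_iff.1 hC
  obtain ⟨V', hV', hVC'⟩ := sigmaZero_three_iff.1 hCc
  obtain ⟨a, ha⟩ := exists_iUnion_iInter_eq_universalOpen hb hV'
  obtain ⟨a', ha'⟩ := exists_iUnion_iInter_eq_universalOpen hb hV
  set x := interleave a a'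
  have hparity : ∀ c < 2, (∃ i, i % 2 = c ∧ ∀ m, x ∈ diagonalFamily b i m) ↔ (x ∈ C ↔ c = 1) := by
    intro c hc
    rw [exists_mod_two_mem_diagonalFamily_iff b hc]
    interval_cases c
    · rw [half_zero_interleave, ← ha, ← hVC']
      simp
    · rw [half_one_interleave, ← ha', ← hVC]
      simp
  have hne : {i | ∀ m, x ∈ diagonalFamily b i m}.Nonempty := by
    by_cases hxC : x ∈ C
    · obtain ⟨i, -, hi⟩ := (hparity 1 one_lt_two).2 (iff_of_true hxC rfl)
      exact ⟨i, hi⟩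
    · obtain ⟨i, -, hi⟩ := (hparity 0 two_pos).2 (iff_of_false hxC zero_ne_one)
      exact ⟨i, hi⟩
  have hj := isLeast_csInf hne
  exact ⟨x, _, hj, ((hparity _ (Nat.mod_lt _ two_pos)).1 ⟨_, rfl, hj.1⟩).trans Nat.odd_iff.symm⟩

end Diagonal

theorem stmt7 :
    Eset ∩ Oset = ∅ ∧
    SigmaZero 3 Eset ∧ SigmaZero 3 Oset ∧
    ¬ ∃ C : Set (ℕ → ℕ), DeltaZero 3 C ∧ Eset ⊆ C ∧ C ∩ Oset = ∅ := by
  refine ⟨disjoint_Eset_Oset.inter_eq, sigmaZero_three_setOf_exists_liminfEq Even,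
    sigmaZero_three_setOf_exists_liminfEq Odd, ?_⟩
  rintro ⟨C, ⟨hC, hCc⟩, hEC, hCO⟩
  obtain ⟨R, hR, hdiag⟩ := exists_isOpen_family_isLeast_iff_odd
  have hf := continuous_leastIndexReduction R
  obtain ⟨x, j, hj, hxj⟩ := hdiag _ (hC.preimage hf) (hCc.preimage hf)
  have hlim := liminfEq_leastIndexReduction hR hj
  rcases Nat.even_or_odd j with he | ho
  · exact Nat.not_odd_iff_even.2 he (hxj.1 (hEC ⟨j, he, hlim⟩))
  · exact hCO.subset ⟨hxj.2 ho, j, ho, hlim⟩
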